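/- Let V be a finite-dimensional real vector space, Ω₀ : V × V → ℝ a bilinear form, and α, β : V → V commuting linear maps (α∘β = β∘α). For h ∈ ℝ define Ω_h(x,y) := ∫₀ʰ Ω₀( exp(s(α+β))(exp(−hβ) x), exp(s(α+β))(exp(−hβ) y) ) ds. Then for all h, h' ∈ ℝ and all x, y ∈ V: Ω_{h+h'}(x,y) = Ω_h( exp(−h'β) x, exp(−h'β) y ) + Ω_{h'}( exp(hα) x, exp(hα) y ). -/

import Mathlib

/-- The exponential of a linear endomorphism of a finite-dimensional real normed space. -/
noncomputable def expEnd (V : Type*) [NormedAddCommGroup V] [NormedSpace ℝ V]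
    [FiniteDimensional ℝ V] (f : V →ₗ[ℝ] V) : V →L[ℝ] V :=
  NormedSpace.exp (LinearMap.toContinuousLinearMap f)

/-- The deformed form Ω_h(x,y) = ∫₀ʰ Ω₀(e^{s(α+β)} e^{−hβ} x, e^{s(α+β)} e^{−hβ} y) ds. -/
noncomputable def OmegaDef (V : Type*) [NormedAddCommGroup V] [NormedSpace ℝ V]
    [FiniteDimensional ℝ V] (Ω₀ : V →ₗ[ℝ] V →ₗ[ℝ] ℝ) (α β : V →ₗ[ℝ] V) (h : ℝ)
    (x y : V) : ℝ :=
  ∫ s in (0 : ℝ)..h,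
    Ω₀ (expEnd V (s • (α + β)) (expEnd V ((-h) • β) x))
       (expEnd V (s • (α + β)) (expEnd V ((-h) • β) y))

section Aux

variable {V : Type*} [NormedAddCommGroup V] [NormedSpace ℝ V] [FiniteDimensional ℝ V]

/-- Exponential of `a•F + b•G`. -/
noncomputable def Eab (F G : V →L[ℝ] V) (a b : ℝ) : V →L[ℝ] V :=
  NormedSpace.exp (a • F + b • G)

set_option synthInstance.maxHeartbeats 1000000 in
lemma Eab_mul {F G : V →L[ℝ] V} (hc : Commute F G) (a b c d : ℝ) :
    Eab F G a b * Eab F G c d = Eab F G (a + c) (b + d) := by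
  unfold Eab
  letI : NormedAlgebra ℚ (V →L[ℝ] V) := .restrictScalars ℚ ℝ _
  rw [← NormedSpace.exp_add_of_commute]
  · congr 1
    rw [add_smul, add_smul]
    exact (add_add_add_comm _ _ _ _).symm
  · exact (((Commute.refl F).smul_left a).smul_right c).add_right
      (((hc.smul_left a).smul_right d)) |>.add_left
      ((((hc.symm.smul_left b).smul_right c).add_right
        (((Commute.refl G).smul_left b).smul_right d)))

lemma Eab_apply {F G : V →L[ℝ] V} (hc : Commute F G) (a b c d : ℝ) (v : V) :
    Eab F G a b (Eab F G c d v) = Eab F G (a + c) (b + d) v := by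
  rw [← Eab_mul hc a b c d]; rfl

lemma expEnd_smul_pair (α β : V →ₗ[ℝ] V) (s : ℝ) :
    expEnd V (s • (α + β)) =
      Eab (LinearMap.toContinuousLinearMap α) (LinearMap.toContinuousLinearMap β) s s := by
  unfold expEnd Eab
  congr 1
  rw [map_smul, map_add, smul_add]

lemma expEnd_smul_right (α β : V →ₗ[ℝ] V) (c : ℝ) :
    expEnd V (c • β) =
      Eab (LinearMap.toContinuousLinearMap α) (LinearMap.toContinuousLinearMap β) 0 c := by
  unfold expEnd Eab
  congr 1
  rw [map_smul, zero_smul, zero_add]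

lemma expEnd_smul_left (α β : V →ₗ[ℝ] V) (c : ℝ) :
    expEnd V (c • α) =
      Eab (LinearMap.toContinuousLinearMap α) (LinearMap.toContinuousLinearMap β) c 0 := by
  unfold expEnd Eab
  congr 1
  rw [map_smul, zero_smul, add_zero]

lemma commute_toCLM (α β : V →ₗ[ℝ] V) (hαβ : α ∘ₗ β = β ∘ₗ α) :
    Commute (LinearMap.toContinuousLinearMap α) (LinearMap.toContinuousLinearMap β) := by
  ext v
  simpa [ContinuousLinearMap.mul_apply] using DFunLike.congr_fun hαβ v

lemma piece1 (α β : V →ₗ[ℝ] V) (hαβ : α ∘ₗ β = β ∘ₗ α) (h h' s : ℝ) (x : V) :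
    expEnd V (s • (α + β)) (expEnd V ((-(h + h')) • β) x)
      = expEnd V (s • (α + β)) (expEnd V ((-h) • β) (expEnd V ((-h') • β) x)) := by
  have hc := commute_toCLM α β hαβ
  rw [expEnd_smul_pair α β, expEnd_smul_right α β, expEnd_smul_right α β (-h),
    expEnd_smul_right α β (-h'), Eab_apply hc, Eab_apply hc, Eab_apply hc]
  congr 2 <;> ring

lemma piece2 (α β : V →ₗ[ℝ] V) (hαβ : α ∘ₗ β = β ∘ₗ α) (h h' t : ℝ) (x : V) :
    expEnd V ((h + t) • (α + β)) (expEnd V ((-(h + h')) • β) x)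
      = expEnd V (t • (α + β)) (expEnd V ((-h') • β) (expEnd V (h • α) x)) := by
  have hc := commute_toCLM α β hαβ
  rw [expEnd_smul_pair α β, expEnd_smul_pair α β, expEnd_smul_right α β,
    expEnd_smul_right α β (-h'), expEnd_smul_left α β h, Eab_apply hc, Eab_apply hc,
    Eab_apply hc]
  congr 2 <;> ring

lemma bilin_cont (Ω₀ : V →ₗ[ℝ] V →ₗ[ℝ] ℝ) : Continuous fun p : V × V => Ω₀ p.1 p.2 := by
  have : (fun p : V × V => Ω₀ p.1 p.2) =
      fun p : V × V =>
        (LinearMap.toContinuousLinearMap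
          ((LinearMap.toContinuousLinearMap :
            (V →ₗ[ℝ] ℝ) ≃ₗ[ℝ] (V →L[ℝ] ℝ)).toLinearMap ∘ₗ Ω₀)) p.1 p.2 := rfl
  rw [this]
  exact (LinearMap.toContinuousLinearMap
    ((LinearMap.toContinuousLinearMap :
      (V →ₗ[ℝ] ℝ) ≃ₗ[ℝ] (V →L[ℝ] ℝ)).toLinearMap ∘ₗ Ω₀)).continuous₂

lemma expEnd_cont (f : V →ₗ[ℝ] V) (u : V) :
    Continuous fun s : ℝ => expEnd V (s • f) u := by
  have h0 : (fun s : ℝ => expEnd V (s • f) u) = fun s : ℝ =>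
      (ContinuousLinearMap.apply ℝ V u)
        (NormedSpace.exp (s • LinearMap.toContinuousLinearMap f)) := by
    funext s
    rw [expEnd, map_smul]
    rfl
  rw [h0]
  letI : NormedAlgebra ℚ (V →L[ℝ] V) := .restrictScalars ℚ ℝ _
  exact (ContinuousLinearMap.apply ℝ V u).continuous.comp
    (NormedSpace.exp_continuous.comp (continuous_id.smul continuous_const))

end Aux

/-- Let V be a finite-dimensional real vector space, Ω₀ a bilinear form, and
α, β commuting linear maps.  Then for all h, h' ∈ ℝ and x, y ∈ V:
Ω_{h+h'}(x,y) = Ω_h(e^{−h'β} x, e^{−h'β} y) + Ω_{h'}(e^{hα} x, e^{hα} y). -/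
theorem statement9 (V : Type*) [NormedAddCommGroup V] [NormedSpace ℝ V]
    [FiniteDimensional ℝ V]
    (Ω₀ : V →ₗ[ℝ] V →ₗ[ℝ] ℝ) (α β : V →ₗ[ℝ] V) (hαβ : α ∘ₗ β = β ∘ₗ α) :
    ∀ (h h' : ℝ) (x y : V),
      OmegaDef V Ω₀ α β (h + h') x y
        = OmegaDef V Ω₀ α β h (expEnd V ((-h') • β) x) (expEnd V ((-h') • β) y)
          + OmegaDef V Ω₀ α β h' (expEnd V (h • α) x) (expEnd V (h • α) y) := by
  intro h h' x y
  have gcont : Continuous fun s : ℝ =>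
      Ω₀ (expEnd V (s • (α + β)) (expEnd V ((-(h + h')) • β) x))
         (expEnd V (s • (α + β)) (expEnd V ((-(h + h')) • β) y)) :=
    (bilin_cont Ω₀).comp ((expEnd_cont (α + β) _).prodMk (expEnd_cont (α + β) _))
  have hint : ∀ a b : ℝ, IntervalIntegrable (fun s : ℝ =>
      Ω₀ (expEnd V (s • (α + β)) (expEnd V ((-(h + h')) • β) x))
         (expEnd V (s • (α + β)) (expEnd V ((-(h + h')) • β) y)))
      MeasureTheory.volume a b := fun a b => gcont.intervalIntegrable a b
  rw [OmegaDef,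
    ← intervalIntegral.integral_add_adjacent_intervals (hint 0 h) (hint h (h + h'))]
  congr 1
  · rw [OmegaDef]
    apply intervalIntegral.integral_congr
    intro s _
    simp only [piece1 α β hαβ h h']
  · have shift : (∫ s in h..(h + h'),
        Ω₀ (expEnd V (s • (α + β)) (expEnd V ((-(h + h')) • β) x))
           (expEnd V (s • (α + β)) (expEnd V ((-(h + h')) • β) y)))
        = ∫ t in (0:ℝ)..h',
        Ω₀ (expEnd V ((h + t) • (α + β)) (expEnd V ((-(h + h')) • β) x))
           (expEnd V ((h + t) • (α + β)) (expEnd V ((-(h + h')) • β) y)) := by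
      rw [intervalIntegral.integral_comp_add_left
        (fun s : ℝ =>
          Ω₀ (expEnd V (s • (α + β)) (expEnd V ((-(h + h')) • β) x))
             (expEnd V (s • (α + β)) (expEnd V ((-(h + h')) • β) y))) h]
      norm_num
    rw [shift, OmegaDef]
    apply intervalIntegral.integral_congr
    intro t _
    simp only [piece2 α β hαβ h h']
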